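/- Let D be a symmetric probability measure on ℝ^{n×m}. Suppose the auction (g,p) satisfies the allocation constraints, IR, and DSIC, the total-payment map B ↦ Σ_{i=1}^n p(B)_i is measurable and D-integrable, and (g,p) maximizes the expected revenue E_{B∼D}[Σ_{i=1}^n p(B)_i] among all auctions with these properties. Then there exists an auction (g̃,p̃) satisfying the allocation constraints, IR, and DSIC, whose allocation and payment rules are both permutation-equivariant, and whose expected revenue E_{B∼D}[Σ_{i=1}^n p̃(B)_i] equals that of (g,p); i.e., the symmetric auction design problem admits a permutation-equivariant optimal solution. -/

import Mathlib

open BigOperators Finset MeasureTheory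

namespace AuctionDesign

/-- Relabeled matrix: `(σ·B·τ) i j = B (σ⁻¹ i) (τ⁻¹ j)`. -/
def relabelM {n m : ℕ} (σ : Equiv.Perm (Fin n)) (τ : Equiv.Perm (Fin m))
    (B : Fin n → Fin m → ℝ) : Fin n → Fin m → ℝ :=
  fun i j => B (σ⁻¹ i) (τ⁻¹ j)

/-- Relabeled vector: `(σ·x) i = x (σ⁻¹ i)`. -/
def relabelV {n : ℕ} (σ : Equiv.Perm (Fin n)) (x : Fin n → ℝ) : Fin n → ℝ :=
  fun i => x (σ⁻¹ i)

/-- Relabeled allocation rule `g^{σ,τ}(B) = σ⁻¹ · g(σ·B·τ) · τ⁻¹`. -/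
def relabelAlloc {n m : ℕ} (g : (Fin n → Fin m → ℝ) → Fin n → Fin m → ℝ)
    (σ : Equiv.Perm (Fin n)) (τ : Equiv.Perm (Fin m)) :
    (Fin n → Fin m → ℝ) → Fin n → Fin m → ℝ :=
  fun B => relabelM σ⁻¹ τ⁻¹ (g (relabelM σ τ B))

/-- Relabeled payment rule `p^{σ,τ}(B) = σ⁻¹ · p(σ·B·τ)`. -/
def relabelPay {n m : ℕ} (p : (Fin n → Fin m → ℝ) → Fin n → ℝ)
    (σ : Equiv.Perm (Fin n)) (τ : Equiv.Perm (Fin m)) :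
    (Fin n → Fin m → ℝ) → Fin n → ℝ :=
  fun B => relabelV σ⁻¹ (p (relabelM σ τ B))

/-- Utility of bidder `i` with valuation row `v` at bid profile `B`. -/
def utility {n m : ℕ} (g : (Fin n → Fin m → ℝ) → Fin n → Fin m → ℝ)
    (p : (Fin n → Fin m → ℝ) → Fin n → ℝ)
    (i : Fin n) (v : Fin m → ℝ) (B : Fin n → Fin m → ℝ) : ℝ :=
  ∑ j, g B i j * v j - p B i

/-- Allocation constraints. -/
def AllocConstraints {n m : ℕ} (g : (Fin n → Fin m → ℝ) → Fin n → Fin m → ℝ) : Prop :=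
  (∀ B i j, 0 ≤ g B i j ∧ g B i j ≤ 1) ∧ ∀ B j, ∑ i, g B i j ≤ 1

/-- Nonnegative payments. -/
def NonnegPay {n m : ℕ} (p : (Fin n → Fin m → ℝ) → Fin n → ℝ) : Prop :=
  ∀ B i, 0 ≤ p B i

/-- Individual rationality. -/
def IR {n m : ℕ} (g : (Fin n → Fin m → ℝ) → Fin n → Fin m → ℝ)
    (p : (Fin n → Fin m → ℝ) → Fin n → ℝ) : Prop :=
  ∀ B i, p B i ≤ ∑ j, g B i j * B i j

/-- Dominant strategy incentive compatibility. -/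
def DSIC {n m : ℕ} (g : (Fin n → Fin m → ℝ) → Fin n → Fin m → ℝ)
    (p : (Fin n → Fin m → ℝ) → Fin n → ℝ) : Prop :=
  ∀ B (i : Fin n) (b' : Fin m → ℝ),
    utility g p i (B i) (Function.update B i b') ≤ utility g p i (B i) B

/-- Permutation-equivariance of an allocation rule. -/
def AllocEquivariant {n m : ℕ} (g : (Fin n → Fin m → ℝ) → Fin n → Fin m → ℝ) : Prop :=
  ∀ (σ : Equiv.Perm (Fin n)) (τ : Equiv.Perm (Fin m)) B,
    g (relabelM σ τ B) = relabelM σ τ (g B)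

/-- Permutation-equivariance of a payment rule. -/
def PayEquivariant {n m : ℕ} (p : (Fin n → Fin m → ℝ) → Fin n → ℝ) : Prop :=
  ∀ (σ : Equiv.Perm (Fin n)) (τ : Equiv.Perm (Fin m)) B,
    p (relabelM σ τ B) = relabelV σ (p B)

/-- A symmetric probability measure on bid matrices. -/
def SymmetricMeasure {n m : ℕ} (D : Measure (Fin n → Fin m → ℝ)) : Prop :=
  ∀ (σ : Equiv.Perm (Fin n)) (τ : Equiv.Perm (Fin m)),
    Measure.map (relabelM σ τ) D = D

/-!
Averaging an auction over all relabelings `(σ, τ)` of bidders and items gives an auction that is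
equivariant because the relabelings form a group. Each relabeled auction is again feasible, IR and
DSIC, and these properties survive averaging because utility is affine in `(g, p)`. By symmetry of
`D` every relabeled auction has the same expected revenue, hence so does the average.
-/

variable {n m : ℕ}

section Relabel

lemma relabelM_apply (σ : Equiv.Perm (Fin n)) (τ : Equiv.Perm (Fin m))
    (B : Fin n → Fin m → ℝ) (i : Fin n) :
    relabelM σ τ B (σ i) = fun j => B i (τ⁻¹ j) := by
  funext j
  simp [relabelM]

lemma relabelM_relabelM (σ σ' : Equiv.Perm (Fin n)) (τ τ' : Equiv.Perm (Fin m))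
    (B : Fin n → Fin m → ℝ) :
    relabelM σ τ (relabelM σ' τ' B) = relabelM (σ * σ') (τ * τ') B := by
  funext i j
  simp [relabelM, mul_inv_rev]

lemma relabelM_update (σ : Equiv.Perm (Fin n)) (τ : Equiv.Perm (Fin m))
    (B : Fin n → Fin m → ℝ) (i : Fin n) (b' : Fin m → ℝ) :
    relabelM σ τ (Function.update B i b') =
      Function.update (relabelM σ τ B) (σ i) (fun j => b' (τ⁻¹ j)) := by
  funext i' j
  obtain rfl | h := eq_or_ne i' (σ i)
  · simp [relabelM]
  · have h' : σ.symm i' ≠ i := fun hi => h (by simp [← hi])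
    simp [relabelM, Function.update_of_ne h, Function.update_of_ne h']

lemma measurable_relabelM (σ : Equiv.Perm (Fin n)) (τ : Equiv.Perm (Fin m)) :
    Measurable (relabelM (n := n) (m := m) σ τ) :=
  measurable_pi_lambda _ fun i => measurable_pi_lambda _ fun j =>
    (measurable_pi_apply (τ⁻¹ j)).comp (measurable_pi_apply (σ⁻¹ i))

variable {g : (Fin n → Fin m → ℝ) → Fin n → Fin m → ℝ} {p : (Fin n → Fin m → ℝ) → Fin n → ℝ}

lemma relabelAlloc_apply (σ : Equiv.Perm (Fin n)) (τ : Equiv.Perm (Fin m))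
    (B : Fin n → Fin m → ℝ) (i : Fin n) (j : Fin m) :
    relabelAlloc g σ τ B i j = g (relabelM σ τ B) (σ i) (τ j) := by
  simp [relabelAlloc, relabelM]

lemma relabelPay_apply (σ : Equiv.Perm (Fin n)) (τ : Equiv.Perm (Fin m))
    (B : Fin n → Fin m → ℝ) (i : Fin n) :
    relabelPay p σ τ B i = p (relabelM σ τ B) (σ i) := by
  simp [relabelPay, relabelV]

lemma relabelAlloc_relabelM (σ σ' : Equiv.Perm (Fin n)) (τ τ' : Equiv.Perm (Fin m))
    (B : Fin n → Fin m → ℝ) :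
    relabelAlloc g σ τ (relabelM σ' τ' B) =
      relabelM σ' τ' (relabelAlloc g (σ * σ') (τ * τ') B) := by
  funext i j
  simp [relabelAlloc_apply, relabelM_relabelM, relabelM]

lemma relabelPay_relabelM (σ σ' : Equiv.Perm (Fin n)) (τ τ' : Equiv.Perm (Fin m))
    (B : Fin n → Fin m → ℝ) :
    relabelPay p σ τ (relabelM σ' τ' B) = relabelV σ' (relabelPay p (σ * σ') (τ * τ') B) := by
  funext i
  simp [relabelPay_apply, relabelM_relabelM, relabelV]

lemma sum_relabelPay (σ : Equiv.Perm (Fin n)) (τ : Equiv.Perm (Fin m))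
    (B : Fin n → Fin m → ℝ) :
    ∑ i, relabelPay p σ τ B i = ∑ i, p (relabelM σ τ B) i := by
  simp only [relabelPay_apply]
  exact Equiv.sum_comp σ _

lemma utility_relabel (σ : Equiv.Perm (Fin n)) (τ : Equiv.Perm (Fin m)) (i : Fin n)
    (v : Fin m → ℝ) (B : Fin n → Fin m → ℝ) :
    utility (relabelAlloc g σ τ) (relabelPay p σ τ) i v B =
      utility g p (σ i) (fun j => v (τ⁻¹ j)) (relabelM σ τ B) := by
  simp only [utility, relabelAlloc_apply, relabelPay_apply]
  congr 1
  exact Fintype.sum_equiv τ _ _ fun j => by simp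

lemma IR_iff_utility_nonneg : IR g p ↔ ∀ B i, 0 ≤ utility g p i (B i) B := by
  simp [IR, utility]

theorem AllocConstraints.relabelAlloc (hg : AllocConstraints g)
    (σ : Equiv.Perm (Fin n)) (τ : Equiv.Perm (Fin m)) :
    AllocConstraints (relabelAlloc g σ τ) := by
  refine ⟨fun B i j => ?_, fun B j => ?_⟩
  · rw [relabelAlloc_apply]
    exact hg.1 _ _ _
  · simp only [relabelAlloc_apply]
    rw [Equiv.sum_comp σ (fun i => g (relabelM σ τ B) i (τ j))]
    exact hg.2 _ _

theorem NonnegPay.relabelPay (hp : NonnegPay p)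
    (σ : Equiv.Perm (Fin n)) (τ : Equiv.Perm (Fin m)) :
    NonnegPay (relabelPay p σ τ) := fun B i => by
  rw [relabelPay_apply]
  exact hp _ _

theorem IR.relabel (h : IR g p) (σ : Equiv.Perm (Fin n)) (τ : Equiv.Perm (Fin m)) :
    IR (relabelAlloc g σ τ) (relabelPay p σ τ) := by
  rw [IR_iff_utility_nonneg] at h ⊢
  intro B i
  rw [utility_relabel, ← relabelM_apply]
  exact h _ _

theorem DSIC.relabel (h : DSIC g p) (σ : Equiv.Perm (Fin n)) (τ : Equiv.Perm (Fin m)) :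
    DSIC (relabelAlloc g σ τ) (relabelPay p σ τ) := by
  intro B i b'
  rw [utility_relabel, utility_relabel, relabelM_update, ← relabelM_apply]
  exact h _ _ _

end Relabel

section Mean

variable {ι : Type*} [Fintype ι]
  {G : ι → (Fin n → Fin m → ℝ) → Fin n → Fin m → ℝ} {P : ι → (Fin n → Fin m → ℝ) → Fin n → ℝ}

noncomputable def meanAlloc (G : ι → (Fin n → Fin m → ℝ) → Fin n → Fin m → ℝ) :
    (Fin n → Fin m → ℝ) → Fin n → Fin m → ℝ :=
  fun B => 𝔼 k, G k B

noncomputable def meanPay (P : ι → (Fin n → Fin m → ℝ) → Fin n → ℝ) :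
    (Fin n → Fin m → ℝ) → Fin n → ℝ :=
  fun B => 𝔼 k, P k B

lemma meanAlloc_apply (B : Fin n → Fin m → ℝ) (i : Fin n) (j : Fin m) :
    meanAlloc G B i j = 𝔼 k, G k B i j := by
  simp [meanAlloc]

lemma meanPay_apply (B : Fin n → Fin m → ℝ) (i : Fin n) : meanPay P B i = 𝔼 k, P k B i := by
  simp [meanPay]

lemma utility_mean (i : Fin n) (v : Fin m → ℝ) (B : Fin n → Fin m → ℝ) :
    utility (meanAlloc G) (meanPay P) i v B = 𝔼 k, utility (G k) (P k) i v B := by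
  simp only [utility, meanAlloc_apply, meanPay_apply, expect_sub_distrib, expect_mul,
    ← expect_sum_comm]

theorem AllocConstraints.mean [Nonempty ι] (h : ∀ k, AllocConstraints (G k)) :
    AllocConstraints (meanAlloc G) := by
  refine ⟨fun B i j => ?_, fun B j => ?_⟩
  · rw [meanAlloc_apply]
    exact ⟨expect_nonneg fun k _ => ((h k).1 B i j).1,
      expect_le univ_nonempty fun k _ => ((h k).1 B i j).2⟩
  · simp only [meanAlloc_apply, ← expect_sum_comm]
    exact expect_le univ_nonempty fun k _ => (h k).2 B j

theorem NonnegPay.mean (h : ∀ k, NonnegPay (P k)) : NonnegPay (meanPay P) := fun B i => by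
  rw [meanPay_apply]
  exact expect_nonneg fun k _ => h k B i

theorem IR.mean (h : ∀ k, IR (G k) (P k)) : IR (meanAlloc G) (meanPay P) := by
  simp only [IR_iff_utility_nonneg, utility_mean] at h ⊢
  exact fun B i => expect_nonneg fun k _ => h k B i

theorem DSIC.mean (h : ∀ k, DSIC (G k) (P k)) : DSIC (meanAlloc G) (meanPay P) := by
  intro B i b'
  simp only [utility_mean]
  exact expect_le_expect fun k _ => h k B i b'

end Mean

section Symmetrize

noncomputable def symmetrizeAlloc (g : (Fin n → Fin m → ℝ) → Fin n → Fin m → ℝ) :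
    (Fin n → Fin m → ℝ) → Fin n → Fin m → ℝ :=
  meanAlloc fun q : Equiv.Perm (Fin n) × Equiv.Perm (Fin m) => relabelAlloc g q.1 q.2

noncomputable def symmetrizePay (p : (Fin n → Fin m → ℝ) → Fin n → ℝ) :
    (Fin n → Fin m → ℝ) → Fin n → ℝ :=
  meanPay fun q : Equiv.Perm (Fin n) × Equiv.Perm (Fin m) => relabelPay p q.1 q.2

theorem allocEquivariant_symmetrizeAlloc (g : (Fin n → Fin m → ℝ) → Fin n → Fin m → ℝ) :
    AllocEquivariant (symmetrizeAlloc g) := by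
  intro σ τ B
  funext i j
  simp only [symmetrizeAlloc, meanAlloc_apply, relabelAlloc_relabelM, relabelM]
  exact Fintype.expect_equiv (Equiv.mulRight (σ, τ)) _ _ fun q => rfl

theorem payEquivariant_symmetrizePay (p : (Fin n → Fin m → ℝ) → Fin n → ℝ) :
    PayEquivariant (symmetrizePay p) := by
  intro σ τ B
  funext i
  simp only [symmetrizePay, meanPay_apply, relabelPay_relabelM, relabelV]
  exact Fintype.expect_equiv (Equiv.mulRight (σ, τ)) _ _ fun q => rfl

variable {D : Measure (Fin n → Fin m → ℝ)} {f : (Fin n → Fin m → ℝ) → ℝ}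

lemma SymmetricMeasure.integral_comp_relabelM (hD : SymmetricMeasure D)
    (hf : AEStronglyMeasurable f D) (σ : Equiv.Perm (Fin n)) (τ : Equiv.Perm (Fin m)) :
    ∫ B, f (relabelM σ τ B) ∂D = ∫ B, f B ∂D := by
  rw [← integral_map (measurable_relabelM σ τ).aemeasurable (by rwa [hD]), hD]

lemma SymmetricMeasure.integrable_comp_relabelM (hD : SymmetricMeasure D)
    (hf : Integrable f D) (σ : Equiv.Perm (Fin n)) (τ : Equiv.Perm (Fin m)) :
    Integrable (fun B => f (relabelM σ τ B)) D :=
  Integrable.comp_aemeasurable (by rwa [hD]) (measurable_relabelM σ τ).aemeasurable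

theorem SymmetricMeasure.integral_symmetrizePay (hD : SymmetricMeasure D)
    {p : (Fin n → Fin m → ℝ) → Fin n → ℝ} (hint : Integrable (fun B => ∑ i, p B i) D) :
    ∫ B, ∑ i, symmetrizePay p B i ∂D = ∫ B, ∑ i, p B i ∂D := by
  have hsum : ∀ B, ∑ i, symmetrizePay p B i =
      𝔼 q : Equiv.Perm (Fin n) × Equiv.Perm (Fin m), ∑ i, p (relabelM q.1 q.2 B) i := by
    intro B
    simp only [symmetrizePay, meanPay_apply, ← expect_sum_comm, sum_relabelPay]
  simp only [hsum, Fintype.expect_eq_sum_div_card]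
  rw [integral_div, integral_finsetSum _ fun q _ => hD.integrable_comp_relabelM hint q.1 q.2]
  simp only [hD.integral_comp_relabelM hint.aestronglyMeasurable]
  rw [sum_const, card_univ, nsmul_eq_mul, mul_div_cancel_left₀ _ (by positivity)]

end Symmetrize

theorem exists_equivariant_optimal_auction_general {n m : ℕ}
    (D : Measure (Fin n → Fin m → ℝ))
    (hD : SymmetricMeasure D)
    (g : (Fin n → Fin m → ℝ) → Fin n → Fin m → ℝ)
    (p : (Fin n → Fin m → ℝ) → Fin n → ℝ)
    (hg : AllocConstraints g) (hp : NonnegPay p) (hIR : IR g p) (hDSIC : DSIC g p)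
    (hint : Integrable (fun B => ∑ i, p B i) D) :
    ∃ (gt : (Fin n → Fin m → ℝ) → Fin n → Fin m → ℝ)
      (pt : (Fin n → Fin m → ℝ) → Fin n → ℝ),
      AllocConstraints gt ∧ NonnegPay pt ∧ IR gt pt ∧ DSIC gt pt ∧
      AllocEquivariant gt ∧ PayEquivariant pt ∧
      ∫ B, (∑ i, pt B i) ∂D = ∫ B, (∑ i, p B i) ∂D :=
  ⟨symmetrizeAlloc g, symmetrizePay p,
    AllocConstraints.mean fun q => hg.relabelAlloc q.1 q.2,
    NonnegPay.mean fun q => hp.relabelPay q.1 q.2,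
    IR.mean fun q => hIR.relabel q.1 q.2,
    DSIC.mean fun q => hDSIC.relabel q.1 q.2,
    allocEquivariant_symmetrizeAlloc g, payEquivariant_symmetrizePay p,
    hD.integral_symmetrizePay hint⟩

/-- the symmetric auction design problem admits a
permutation-equivariant optimal solution. -/
theorem exists_equivariant_optimal_auction {n m : ℕ} (hn : 0 < n) (hm : 0 < m)
    (D : Measure (Fin n → Fin m → ℝ)) [IsProbabilityMeasure D]
    (hD : SymmetricMeasure D)
    (g : (Fin n → Fin m → ℝ) → Fin n → Fin m → ℝ)
    (p : (Fin n → Fin m → ℝ) → Fin n → ℝ)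
    (hg : AllocConstraints g) (hp : NonnegPay p) (hIR : IR g p) (hDSIC : DSIC g p)
    (hmeas : Measurable fun B => ∑ i, p B i)
    (hint : Integrable (fun B => ∑ i, p B i) D)
    (hopt : ∀ (g' : (Fin n → Fin m → ℝ) → Fin n → Fin m → ℝ)
        (p' : (Fin n → Fin m → ℝ) → Fin n → ℝ),
        AllocConstraints g' → NonnegPay p' → IR g' p' → DSIC g' p' →
        Measurable (fun B => ∑ i, p' B i) →
        Integrable (fun B => ∑ i, p' B i) D →
        ∫ B, (∑ i, p' B i) ∂D ≤ ∫ B, (∑ i, p B i) ∂D) :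
    ∃ (gt : (Fin n → Fin m → ℝ) → Fin n → Fin m → ℝ)
      (pt : (Fin n → Fin m → ℝ) → Fin n → ℝ),
      AllocConstraints gt ∧ NonnegPay pt ∧ IR gt pt ∧ DSIC gt pt ∧
      AllocEquivariant gt ∧ PayEquivariant pt ∧
      ∫ B, (∑ i, pt B i) ∂D = ∫ B, (∑ i, p B i) ∂D :=
  exists_equivariant_optimal_auction_general D hD g p hg hp hIR hDSIC hint
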